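/- arXiv:1310.7626 — 2 statements merged into one kernel-verified Lean document; each statement's English description precedes it below -/
import Mathlib

section
/- For quaternions p, s with |p| < |s| and s ≠ 0, and for any quaternion B, the series Σ_{m≥0} s^{-1-m} B pᵐ converges and equals -(Bp - s̄B)(p² - 2Re(s)p + |s|²)⁻¹, and this also equals (s² - 2Re(p)s + |p|²)⁻¹(sB - B p̄). -/
open scoped Quaternion

/-!
The sum `T` of the series solves the Sylvester equation `s T - T p = B`: multiplying the series
by `s` on the left or by `p` on the right shifts it by one term. Since `s + s̄ = 2 Re s` and
`s̄ s = |s|²` are central, every `X` satisfies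
`s̄ (s X - X p) - (s X - X p) p = X (p² - 2 Re(s) p + |s|²)`, and symmetrically
`s (s X - X p) - (s X - X p) p̄ = (s² - 2 Re(p) s + |p|²) X`. Taking `X = T` expresses `T` by
both closed forms, provided the quadratic factors are nonzero; they are, since for `B = 1` their
vanishing would force `s̄ = p`, resp. `s = p̄`, contradicting `|p| < |s|`.
-/

section Sylvester

variable {𝕜 : Type*} [NormedDivisionRing 𝕜]

theorem summable_inv_pow_succ_mul_mul_pow [CompleteSpace 𝕜] {p s : 𝕜} (hps : ‖p‖ < ‖s‖)
    (B : 𝕜) : Summable fun m : ℕ => s⁻¹ ^ (m + 1) * B * p ^ m := by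
  have hs : 0 < ‖s‖ := (norm_nonneg p).trans_lt hps
  have hnorm (m : ℕ) : ‖s⁻¹ ^ (m + 1) * B * p ^ m‖ = ‖s‖⁻¹ * ‖B‖ * (‖p‖ / ‖s‖) ^ m := by
    rw [norm_mul, norm_mul, norm_pow, norm_pow, norm_inv, div_pow, inv_pow, div_eq_mul_inv]
    ring
  refine Summable.of_norm ?_
  simp only [hnorm]
  exact (summable_geometric_of_lt_one (by positivity) ((div_lt_one hs).mpr hps)).mul_left _

theorem HasSum.mul_sub_mul_eq_of_inv_pow_succ {p s B T : 𝕜} (hs : s ≠ 0)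
    (hT : HasSum (fun m : ℕ => s⁻¹ ^ (m + 1) * B * p ^ m) T) : s * T - T * p = B := by
  have hleft : HasSum (fun m : ℕ => s⁻¹ ^ m * B * p ^ m) (s * T) := by
    have hterm (m : ℕ) : s * (s⁻¹ ^ (m + 1) * B * p ^ m) = s⁻¹ ^ m * B * p ^ m := by
      rw [pow_succ', ← mul_assoc, ← mul_assoc, ← mul_assoc, mul_inv_cancel₀ hs, one_mul]
    simpa only [hterm] using hT.mul_left s
  have hshift : HasSum (fun m : ℕ => s⁻¹ ^ (m + 1) * B * p ^ (m + 1)) (T * p) := by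
    simpa only [mul_assoc, ← pow_succ] using hT.mul_right p
  have hright : HasSum (fun m : ℕ => s⁻¹ ^ m * B * p ^ m) (T * p + B) := by
    simpa using (hasSum_nat_add_iff (f := fun m : ℕ => s⁻¹ ^ m * B * p ^ m) 1).mp hshift
  rw [hleft.unique hright, add_sub_cancel_left]

theorem exists_hasSum_inv_pow_succ_mul_mul_pow [CompleteSpace 𝕜] {p s : 𝕜} (hps : ‖p‖ < ‖s‖)
    (B : 𝕜) :
    ∃ T, HasSum (fun m : ℕ => s⁻¹ ^ (m + 1) * B * p ^ m) T ∧ s * T - T * p = B := by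
  have hs : s ≠ 0 := norm_pos_iff.mp ((norm_nonneg p).trans_lt hps)
  obtain ⟨T, hT⟩ := summable_inv_pow_succ_mul_mul_pow hps B
  exact ⟨T, hT, hT.mul_sub_mul_eq_of_inv_pow_succ hs⟩

end Sylvester

section Quadratic

variable {R A : Type*} [CommRing R] [Ring A] [Algebra R A]

theorem mul_sub_mul_eq_mul_quadratic {s t : A} {c d : R} (hsum : t + s = algebraMap R A c)
    (hprod : t * s = algebraMap R A d) (X p : A) :
    t * (s * X - X * p) - (s * X - X * p) * p = X * (p ^ 2 - c • p + algebraMap R A d) := by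
  calc t * (s * X - X * p) - (s * X - X * p) * p = (t * s) * X - (t + s) * X * p + X * p ^ 2 := by
        noncomm_ring
    _ = X * (p ^ 2 - c • p + algebraMap R A d) := by
        rw [hsum, hprod, Algebra.commutes, Algebra.commutes, mul_assoc X, ← Algebra.smul_def]
        noncomm_ring

theorem mul_sub_mul_eq_quadratic_mul {p t : A} {c d : R} (hsum : p + t = algebraMap R A c)
    (hprod : p * t = algebraMap R A d) (X s : A) :
    s * (s * X - X * p) - (s * X - X * p) * t = (s ^ 2 - c • s + algebraMap R A d) * X := by
  calc s * (s * X - X * p) - (s * X - X * p) * t = s ^ 2 * X - s * X * (p + t) + X * (p * t) := by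
        noncomm_ring
    _ = (s ^ 2 - c • s + algebraMap R A d) * X := by
        rw [hsum, hprod, ← Algebra.commutes, ← Algebra.commutes,
          ← mul_assoc (algebraMap R A c), ← Algebra.smul_def]
        noncomm_ring

end Quadratic

namespace Quaternion

theorem star_mul_self_eq_norm_sq (a : ℍ[ℝ]) : star a * a = ((‖a‖ ^ 2 : ℝ) : ℍ[ℝ]) := by
  rw [star_mul_self, normSq_eq_norm_mul_self, sq]

theorem self_mul_star_eq_norm_sq (a : ℍ[ℝ]) : a * star a = ((‖a‖ ^ 2 : ℝ) : ℍ[ℝ]) := by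
  rw [self_mul_star, normSq_eq_norm_mul_self, sq]

theorem star_mul_sub_mul_eq_mul_quadratic (s p X : ℍ[ℝ]) :
    star s * (s * X - X * p) - (s * X - X * p) * p =
      X * (p ^ 2 - (2 * s.re) • p + ((‖s‖ ^ 2 : ℝ) : ℍ[ℝ])) :=
  mul_sub_mul_eq_mul_quadratic (star_add_self' s) (star_mul_self_eq_norm_sq s) X p

theorem mul_sub_mul_star_eq_quadratic_mul (s p X : ℍ[ℝ]) :
    s * (s * X - X * p) - (s * X - X * p) * star p =
      (s ^ 2 - (2 * p.re) • s + ((‖p‖ ^ 2 : ℝ) : ℍ[ℝ])) * X :=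
  mul_sub_mul_eq_quadratic_mul (self_add_star' p) (self_mul_star_eq_norm_sq p) X s

theorem quadratic_right_ne_zero {p s : ℍ[ℝ]} (hps : ‖p‖ < ‖s‖) :
    p ^ 2 - (2 * s.re) • p + ((‖s‖ ^ 2 : ℝ) : ℍ[ℝ]) ≠ 0 := by
  intro h
  obtain ⟨T, -, hT⟩ := exists_hasSum_inv_pow_succ_mul_mul_pow hps 1
  have := star_mul_sub_mul_eq_mul_quadratic s p T
  rw [hT, h, mul_one, one_mul, mul_zero, sub_eq_zero] at this
  exact hps.ne (by rw [← this, norm_star])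

theorem quadratic_left_ne_zero {p s : ℍ[ℝ]} (hps : ‖p‖ < ‖s‖) :
    s ^ 2 - (2 * p.re) • s + ((‖p‖ ^ 2 : ℝ) : ℍ[ℝ]) ≠ 0 := by
  intro h
  obtain ⟨T, -, hT⟩ := exists_hasSum_inv_pow_succ_mul_mul_pow hps 1
  have := mul_sub_mul_star_eq_quadratic_mul s p T
  rw [hT, h, mul_one, one_mul, zero_mul, sub_eq_zero] at this
  exact hps.ne (by rw [this, norm_star])

end Quaternion

theorem right_kernel_series_general (p s B : ℍ[ℝ]) (hps : ‖p‖ < ‖s‖) :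
    HasSum (fun m : ℕ => s⁻¹ ^ (m + 1) * B * p ^ m)
      (-((B * p - star s * B) * (p ^ 2 - (2 * s.re) • p + ((‖s‖ ^ 2 : ℝ) : ℍ[ℝ]))⁻¹)) ∧
    -((B * p - star s * B) * (p ^ 2 - (2 * s.re) • p + ((‖s‖ ^ 2 : ℝ) : ℍ[ℝ]))⁻¹) =
      (s ^ 2 - (2 * p.re) • s + ((‖p‖ ^ 2 : ℝ) : ℍ[ℝ]))⁻¹ * (s * B - B * star p) := by
  obtain ⟨T, hT, hTB⟩ := exists_hasSum_inv_pow_succ_mul_mul_pow hps B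
  have hright :
      -((B * p - star s * B) * (p ^ 2 - (2 * s.re) • p + ((‖s‖ ^ 2 : ℝ) : ℍ[ℝ]))⁻¹) = T := by
    rw [← neg_mul, neg_sub, ← hTB, Quaternion.star_mul_sub_mul_eq_mul_quadratic,
      mul_inv_cancel_right₀ (Quaternion.quadratic_right_ne_zero hps)]
  have hleft :
      (s ^ 2 - (2 * p.re) • s + ((‖p‖ ^ 2 : ℝ) : ℍ[ℝ]))⁻¹ * (s * B - B * star p) = T := by
    rw [← hTB, Quaternion.mul_sub_mul_star_eq_quadratic_mul,
      inv_mul_cancel_left₀ (Quaternion.quadratic_left_ne_zero hps)]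
  exact ⟨hright ▸ hT, hright.trans hleft.symm⟩

/-- For quaternions `p`, `s` with `|p| < |s|` and `s ≠ 0` and any quaternion `B`,
the series `Σ_{m≥0} s^{-1-m} B pᵐ` converges to
`-(Bp - s̄B)(p² - 2Re(s)p + |s|²)⁻¹`, which also equals
`(s² - 2Re(p)s + |p|²)⁻¹(sB - B p̄)`. -/
theorem right_kernel_series (p s B : ℍ[ℝ]) (hps : ‖p‖ < ‖s‖) (hs : s ≠ 0) :
    HasSum (fun m : ℕ => s⁻¹ ^ (m + 1) * B * p ^ m)
      (-((B * p - star s * B) * (p ^ 2 - (2 * s.re) • p + ((‖s‖ ^ 2 : ℝ) : ℍ[ℝ]))⁻¹)) ∧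
    -((B * p - star s * B) * (p ^ 2 - (2 * s.re) • p + ((‖s‖ ^ 2 : ℝ) : ℍ[ℝ]))⁻¹) =
      (s ^ 2 - (2 * p.re) • s + ((‖p‖ ^ 2 : ℝ) : ℍ[ℝ]))⁻¹ * (s * B - B * star p) :=
  right_kernel_series_general p s B hps
end

section
/- Partial sum identity: for quaternions p, s with p ∉ [s] (so that Q := p² - 2Re(s)p + |s|² is invertible) and s ≠ 0, and any quaternion A, for every natural number m: Σ_{j=0}^m pʲ A s^{-1-j} = -Q⁻¹(pA - A s̄) + p^{m+1} Q⁻¹(pA - A s̄) s^{-1-m}. -/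
/-!
With `Q := p² - 2Re(s)p + |s|²` and `B := Q⁻¹(pA - As̄)`, the identity says that the partial sums
telescope: `p^(j+1) B s^(-j-1) - p^j B s^(-j) = p^j A s^(-j-1)` as soon as `B` solves the
Sylvester equation `pB = Bs + A`. Since `s + s̄ = 2Re(s)` and `s̄s = |s|²` are real,
`p(pA - As̄) = (pA - As̄)s + QA`, and `B` solves the equation because `p` commutes with `Q`.
Finally `p² = 2Re(p)p - |p|²` rewrites `Q` as `2(Re p - Re s)p + |s|² - |p|²`, which vanishes only
if `Re p = Re s` and `|p| = |s|`: otherwise `p` would be real, and then `Q = (p - Re s)² + |Im s|²`.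
-/

open scoped Quaternion
open Quaternion

theorem sum_range_pow_mul_mul_inv_pow {K : Type*} [DivisionRing K] {p s A B : K} (hs : s ≠ 0)
    (hB : p * B = B * s + A) (n : ℕ) :
    ∑ j ∈ Finset.range n, p ^ j * A * s⁻¹ ^ (j + 1) = -B + p ^ n * B * s⁻¹ ^ n := by
  have hstep (j : ℕ) : p ^ (j + 1) * B * s⁻¹ ^ (j + 1) - p ^ j * B * s⁻¹ ^ j
      = p ^ j * A * s⁻¹ ^ (j + 1) := by
    have hcancel : s * s⁻¹ ^ (j + 1) = s⁻¹ ^ j := by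
      rw [pow_succ', ← mul_assoc, mul_inv_cancel₀ hs, one_mul]
    rw [pow_succ, mul_assoc _ p, hB, ← hcancel]
    noncomm_ring
  rw [← Finset.sum_congr rfl fun j _ => hstep j,
    Finset.sum_range_sub (fun j => p ^ j * B * s⁻¹ ^ j), pow_zero, pow_zero, one_mul, mul_one,
    neg_add_eq_sub]

theorem Commute.mul_inv_mul_eq_of_mul_eq {K : Type*} [DivisionRing K] {p Q C s A : K}
    (hpQ : Commute p Q) (hQ : Q ≠ 0) (h : p * C = C * s + Q * A) :
    p * (Q⁻¹ * C) = Q⁻¹ * C * s + A := by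
  rw [← mul_assoc, hpQ.inv_right₀.eq, mul_assoc, h, mul_add, ← mul_assoc Q⁻¹ Q,
    inv_mul_cancel₀ hQ, one_mul, mul_assoc]

namespace Quaternion

theorem sq_re_le_normSq (a : ℍ[ℝ]) : a.re ^ 2 ≤ normSq a := by
  rw [normSq_def']
  nlinarith [sq_nonneg a.imI, sq_nonneg a.imJ, sq_nonneg a.imK]

theorem sq_sub_two_re_smul_add_normSq (p : ℍ[ℝ]) :
    p ^ 2 - (2 * p.re) • p + ((normSq p : ℝ) : ℍ[ℝ]) = 0 := by
  rw [← coe_mul_eq_smul, coe_commutes, ← self_add_star', ← self_mul_star, sq, mul_add]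
  abel

theorem sq_sub_two_re_smul_add_sq_norm (p s : ℍ[ℝ]) :
    p ^ 2 - (2 * s.re) • p + ((‖s‖ ^ 2 : ℝ) : ℍ[ℝ]) =
      (2 * (p.re - s.re)) • p + ((normSq s - normSq p : ℝ) : ℍ[ℝ]) := by
  rw [sq ‖s‖, ← normSq_eq_norm_mul_self, ← sub_eq_zero, ← sq_sub_two_re_smul_add_normSq p,
    coe_sub, mul_sub, sub_smul]
  abel

theorem sq_sub_two_re_smul_add_sq_norm_ne_zero {p s : ℍ[ℝ]} (h : ¬(p.re = s.re ∧ ‖p‖ = ‖s‖)) :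
    p ^ 2 - (2 * s.re) • p + ((‖s‖ ^ 2 : ℝ) : ℍ[ℝ]) ≠ 0 := by
  rw [sq_sub_two_re_smul_add_sq_norm]
  intro hQ
  by_cases hre : p.re = s.re
  · rw [hre, sub_self, mul_zero, zero_smul, zero_add, ← coe_zero, coe_inj, sub_eq_zero,
      normSq_eq_norm_mul_self, normSq_eq_norm_mul_self] at hQ
    exact h ⟨hre, (mul_self_inj (norm_nonneg _) (norm_nonneg _)).mp hQ.symm⟩
  · have hc : 2 * (p.re - s.re) ≠ 0 := by
      have := sub_ne_zero.mpr hre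
      positivity
    have him : p.im = 0 := by
      simpa [hc] using congrArg Quaternion.im hQ
    have hp : normSq p = p.re ^ 2 := by
      rw [← re_add_im p, him, add_zero, normSq_coe, re_coe]
    have hreal := congrArg QuaternionAlgebra.re hQ
    simp only [re_add, re_smul, re_coe, re_zero, smul_eq_mul, hp] at hreal
    apply hre
    nlinarith [sq_re_le_normSq s]

theorem commute_sq_sub_two_re_smul_add_sq_norm (p s : ℍ[ℝ]) :
    Commute p (p ^ 2 - (2 * s.re) • p + ((‖s‖ ^ 2 : ℝ) : ℍ[ℝ])) := by
  rw [sq_sub_two_re_smul_add_sq_norm]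
  exact ((Commute.refl p).smul_right _).add_right (coe_commute _ p).symm

theorem mul_mul_sub_mul_star (p s A : ℍ[ℝ]) :
    p * (p * A - A * star s) =
      (p * A - A * star s) * s + (p ^ 2 - (2 * s.re) • p + ((‖s‖ ^ 2 : ℝ) : ℍ[ℝ])) * A := by
  have hstar : p * A * star s = (2 * s.re) • (p * A) - p * A * s := by
    rw [← mul_coe_eq_smul, ← self_add_star', mul_add]
    abel
  have hnorm : A * star s * s = ((‖s‖ ^ 2 : ℝ) : ℍ[ℝ]) * A := by
    rw [mul_assoc, star_mul_self, coe_commutes, normSq_eq_norm_mul_self, sq]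
  rw [mul_sub, ← mul_assoc p A, hstar, sub_mul, hnorm, add_mul, sub_mul, sq p, smul_mul_assoc,
    mul_assoc p p A, mul_assoc p A s]
  abel

end Quaternion

/-- Partial sum identity: for quaternions `p`, `s` with `p ∉ [s]`
(so `Q := p² - 2Re(s)p + |s|²` is invertible), `s ≠ 0`, and any quaternion `A`,
`Σ_{j=0}^m pʲ A s^{-1-j} = -Q⁻¹(pA - A s̄) + p^{m+1} Q⁻¹(pA - A s̄) s^{-1-m}`. -/
theorem partial_sum_identity (p s A : ℍ[ℝ]) (h : ¬(p.re = s.re ∧ ‖p‖ = ‖s‖))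
    (hs : s ≠ 0) (m : ℕ) :
    ∑ j ∈ Finset.range (m + 1), p ^ j * A * s⁻¹ ^ (j + 1) =
      -((p ^ 2 - (2 * s.re) • p + ((‖s‖ ^ 2 : ℝ) : ℍ[ℝ]))⁻¹ * (p * A - A * star s)) +
        p ^ (m + 1) *
          ((p ^ 2 - (2 * s.re) • p + ((‖s‖ ^ 2 : ℝ) : ℍ[ℝ]))⁻¹ * (p * A - A * star s)) *
          s⁻¹ ^ (m + 1) :=
  sum_range_pow_mul_mul_inv_pow hs
    ((commute_sq_sub_two_re_smul_add_sq_norm p s).mul_inv_mul_eq_of_mul_eq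
      (sq_sub_two_re_smul_add_sq_norm_ne_zero h) (mul_mul_sub_mul_star p s A)) (m + 1)
end
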